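/- For every Λ ∈ (0,1) there is a constant C > 0 such that for all ε ∈ (0,1], all real N with Λ/(2ε) < N ≤ 1/(2ε), all t ≥ 0 and all z ∈ ℝ², | ∑_{n ∈ ℤ², Λ/(2ε) < ⟨n⟩ ≤ N} ε^{−4} ∫₀ᵗ e^{−s/ε²} · s² · φ( s²·λ_ε(⟨n⟩)² )² ds · e^{i n·z} | ≤ C, where λ_ε(r) = √(1−4ε²r²)/(2ε²) and φ(x) = ∑_{j=0}^∞ x^j/(2j+1)!, so that s²·φ(s²λ²)² = (sinh(sλ)/λ)² whenever λ > 0. -/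

import Mathlib

/-- The entire function `φ(x) = ∑_{j=0}^∞ x^j/(2j+1)!`. -/
noncomputable def phi (x : ℝ) : ℝ := ∑' j : ℕ, x ^ j / (Nat.factorial (2 * j + 1) : ℝ)

/-- The low-frequency damped-wave rate `λ_ε(r) = √(1−4ε²r²)/(2ε²)`. -/
noncomputable def lam (ε r : ℝ) : ℝ := Real.sqrt (1 - 4 * ε ^ 2 * r ^ 2) / (2 * ε ^ 2)

/-- The Japanese bracket `⟨n⟩ = (1+|n|²)^{1/2}` of a lattice point `n ∈ ℤ²`. -/
noncomputable def jb (n : ℤ × ℤ) : ℝ :=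
  Real.sqrt (1 + ((n.1 : ℝ) ^ 2 + (n.2 : ℝ) ^ 2))

/-- The pairing `n·z` of a lattice point with `z ∈ ℝ²`. -/
def dotZ (n : ℤ × ℤ) (z : ℝ × ℝ) : ℝ := (n.1 : ℝ) * z.1 + (n.2 : ℝ) * z.2

open Real Set MeasureTheory
open scoped Nat Finset

/-! In the window, `Λ < 2ε⟨n⟩`, so `2λ_ε(⟨n⟩) ≤ (1 - c)/ε²` with `c = 1 - √(1 - Λ²) > 0`.
Since `φ(y²) ≤ eʸ`, the integrand is at most `s² e^{-cs/ε²}`, whose integral over `[0, ∞)` is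
`2ε⁶/c³`; so every term has modulus at most `2ε²/c³`. The frequencies with `⟨n⟩ ≤ 1/(2ε)` lie in
a square of at most `4/ε²` lattice points, and the sum is bounded by `8/c³`. -/

lemma phi_nonneg {x : ℝ} (hx : 0 ≤ x) : 0 ≤ phi x :=
  tsum_nonneg fun j => by positivity

-- Termwise, `φ(y²) = ∑ y^{2j}/(2j+1)!` is dominated by the even part of the exponential series.
lemma phi_sq_le_exp {y : ℝ} (hy : 0 ≤ y) : phi (y ^ 2) ≤ exp y := by
  have hexp : Summable fun n : ℕ => y ^ n / (n ! : ℝ) := summable_pow_div_factorial y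
  have hdouble : Function.Injective fun j : ℕ => 2 * j := fun a b h => by simpa using h
  have heven : Summable fun j : ℕ => y ^ (2 * j) / ((2 * j) ! : ℝ) :=
    hexp.comp_injective hdouble
  have hterm : ∀ j : ℕ, (y ^ 2) ^ j / ((2 * j + 1) ! : ℝ) ≤ y ^ (2 * j) / ((2 * j) ! : ℝ) :=
    fun j => by
      rw [← pow_mul]
      exact div_le_div_of_nonneg_left (by positivity) (by positivity)
        (by exact_mod_cast Nat.factorial_le (Nat.le_succ _))
  calc phi (y ^ 2) ≤ ∑' j : ℕ, y ^ (2 * j) / ((2 * j) ! : ℝ) :=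
        (heven.of_nonneg_of_le (fun j => by positivity) hterm).tsum_le_tsum hterm heven
    _ ≤ ∑' n : ℕ, y ^ n / (n ! : ℝ) :=
        heven.tsum_le_tsum_of_inj _ hdouble (fun n _ => by positivity) (fun j => le_rfl) hexp
    _ = exp y := by rw [exp_eq_exp_ℝ, NormedSpace.exp_eq_tsum_div]

lemma integral_sq_mul_exp_neg_mul_le {a t : ℝ} (ha : 0 < a) (ht : 0 ≤ t) :
    ∫ s in (0:ℝ)..t, s ^ 2 * exp (-(a * s)) ≤ 2 / a ^ 3 := by
  have hint : IntegrableOn (fun s : ℝ => s ^ 2 * exp (-(a * s))) (Ioi 0) := by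
    refine (integrableOn_rpow_mul_exp_neg_mul_rpow (s := 2) (p := 1) (by norm_num) one_pos ha
      ).congr_fun (fun s _ => ?_) measurableSet_Ioi
    dsimp only
    rw [rpow_one, rpow_two, neg_mul]
  have hGamma : ∫ s in Ioi (0:ℝ), s ^ 2 * exp (-(a * s)) = 2 / a ^ 3 := by
    have := integral_rpow_mul_exp_neg_mul_Ioi (a := 3) (by norm_num) ha
    norm_num [Gamma_nat_eq_factorial] at this
    rw [this]
    ring
  rw [intervalIntegral.integral_of_le ht, ← hGamma]
  exact setIntegral_mono_set hint (.of_forall fun s => by positivity)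
    Ioc_subset_Ioi_self.eventuallyLE

lemma exp_neg_mul_sq_mul_phi_sq_le {a l s : ℝ} (hl : 0 ≤ l) (hs : 0 ≤ s) :
    exp (-(a * s)) * s ^ 2 * phi (s ^ 2 * l ^ 2) ^ 2 ≤ s ^ 2 * exp (-((a - 2 * l) * s)) := by
  have hphi : phi (s ^ 2 * l ^ 2) ≤ exp (s * l) := by
    rw [← mul_pow]
    exact phi_sq_le_exp (by positivity)
  calc exp (-(a * s)) * s ^ 2 * phi (s ^ 2 * l ^ 2) ^ 2
      ≤ exp (-(a * s)) * s ^ 2 * exp (s * l) ^ 2 := by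
        gcongr
        exact phi_nonneg (by positivity)
    _ = s ^ 2 * exp (-((a - 2 * l) * s)) := by
        rw [← exp_nat_mul, mul_comm, ← mul_assoc, ← exp_add]
        ring_nf

lemma two_mul_lam_le {ε r Λ : ℝ} (hΛ : 0 ≤ Λ) (hΛr : Λ ≤ 2 * ε * r) :
    2 * lam ε r ≤ √(1 - Λ ^ 2) / ε ^ 2 := by
  rw [lam, mul_div_assoc', mul_div_mul_left _ _ two_ne_zero]
  gcongr
  nlinarith

lemma abs_integral_exp_neg_mul_sq_mul_phi_sq_le {a l t : ℝ} (hl : 0 ≤ l) (hla : 2 * l < a)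
    (ht : 0 ≤ t) :
    |∫ s in (0:ℝ)..t, exp (-(a * s)) * s ^ 2 * phi (s ^ 2 * l ^ 2) ^ 2| ≤ 2 / (a - 2 * l) ^ 3 := by
  have hbound : ∀ s ∈ Ioc 0 t,
      ‖exp (-(a * s)) * s ^ 2 * phi (s ^ 2 * l ^ 2) ^ 2‖ ≤ s ^ 2 * exp (-((a - 2 * l) * s)) :=
    fun s hs => by
      rw [Real.norm_of_nonneg (by positivity)]
      exact exp_neg_mul_sq_mul_phi_sq_le hl hs.1.le
  calc _ ≤ ∫ s in (0:ℝ)..t, s ^ 2 * exp (-((a - 2 * l) * s)) :=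
        intervalIntegral.norm_integral_le_of_norm_le ht (.of_forall hbound)
          (Continuous.intervalIntegrable (by fun_prop) 0 t)
    _ ≤ 2 / (a - 2 * l) ^ 3 := integral_sq_mul_exp_neg_mul_le (by linarith) ht

lemma one_sub_sqrt_one_sub_sq_pos {Λ : ℝ} (hΛ : 0 < Λ) : 0 < 1 - √(1 - Λ ^ 2) := by
  have : √(1 - Λ ^ 2) < 1 := (sqrt_lt' one_pos).2 (by nlinarith)
  linarith

noncomputable def dampedWaveVariance (ε t r : ℝ) : ℝ :=
  (∫ s in (0:ℝ)..t, exp (-s / ε ^ 2) * s ^ 2 * phi (s ^ 2 * lam ε r ^ 2) ^ 2) / ε ^ 4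

lemma abs_dampedWaveVariance_le {ε t r Λ : ℝ} (hε : 0 < ε) (ht : 0 ≤ t) (hΛ : 0 < Λ)
    (hΛr : Λ / (2 * ε) < r) :
    |dampedWaveVariance ε t r| ≤ 2 * ε ^ 2 / (1 - √(1 - Λ ^ 2)) ^ 3 := by
  have hc := one_sub_sqrt_one_sub_sq_pos hΛ
  have hl : 0 ≤ lam ε r := by unfold lam; positivity
  have hlam : (1 - √(1 - Λ ^ 2)) / ε ^ 2 ≤ (ε ^ 2)⁻¹ - 2 * lam ε r := by
    have hΛr' : Λ ≤ 2 * ε * r := by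
      rw [div_lt_iff₀ (by positivity), mul_comm] at hΛr
      exact hΛr.le
    rw [sub_div, one_div]
    linarith [two_mul_lam_le hΛ.le hΛr']
  have hexp : ∀ s : ℝ, exp (-s / ε ^ 2) = exp (-((ε ^ 2)⁻¹ * s)) := fun s => by ring_nf
  rw [dampedWaveVariance, abs_div, abs_of_pos (by positivity : 0 < ε ^ 4),
    div_le_iff₀ (by positivity)]
  simp only [hexp]
  calc _ ≤ 2 / ((ε ^ 2)⁻¹ - 2 * lam ε r) ^ 3 :=
        abs_integral_exp_neg_mul_sq_mul_phi_sq_le hl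
          (by linarith [div_pos hc (pow_pos hε 2)]) ht
    _ ≤ 2 / ((1 - √(1 - Λ ^ 2)) / ε ^ 2) ^ 3 := by gcongr
    _ = 2 * ε ^ 2 / (1 - √(1 - Λ ^ 2)) ^ 3 * ε ^ 4 := by field_simp

lemma norm_tsum_le_card_mul {ι E : Type*} [NormedAddCommGroup E] {f : ι → E} (s : Finset ι)
    (hf : ∀ i ∉ s, f i = 0) {B : ℝ} (hB : ∀ i ∈ s, ‖f i‖ ≤ B) : ‖∑' i, f i‖ ≤ #s * B := by
  rw [tsum_eq_sum hf, ← nsmul_eq_mul]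
  exact (norm_sum_le _ _).trans (Finset.sum_le_card_nsmul _ _ _ hB)

noncomputable def latticeSquare (M : ℕ) : Finset (ℤ × ℤ) :=
  Finset.Icc (-(M : ℤ)) M ×ˢ Finset.Icc (-(M : ℤ)) M

lemma card_latticeSquare (M : ℕ) : #(latticeSquare M) = (2 * M + 1) ^ 2 := by
  rw [latticeSquare, Finset.card_product, Int.card_Icc, sq]
  congr 1 <;> omega

lemma mem_Icc_natFloor_of_abs_le {m : ℤ} {R : ℝ} (h : |(m : ℝ)| ≤ R) :
    m ∈ Finset.Icc (-(⌊R⌋₊ : ℤ)) ⌊R⌋₊ := by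
  have : m.natAbs ≤ ⌊R⌋₊ := Nat.le_floor (by rwa [Nat.cast_natAbs, Int.cast_abs])
  rw [Finset.mem_Icc]
  omega

lemma mem_latticeSquare_of_jb_le {n : ℤ × ℤ} {R : ℝ} (h : jb n ≤ R) :
    n ∈ latticeSquare ⌊R⌋₊ := by
  have habs : ∀ x : ℝ, x ^ 2 ≤ (n.1 : ℝ) ^ 2 + (n.2 : ℝ) ^ 2 → |x| ≤ R := fun x hx =>
    calc |x| = √(x ^ 2) := (sqrt_sq_eq_abs x).symm
      _ ≤ jb n := sqrt_le_sqrt (by linarith)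
      _ ≤ R := h
  exact Finset.mem_product.2
    ⟨mem_Icc_natFloor_of_abs_le (habs _ (by nlinarith [sq_nonneg (n.2 : ℝ)])),
      mem_Icc_natFloor_of_abs_le (habs _ (by nlinarith [sq_nonneg (n.1 : ℝ)]))⟩

lemma two_mul_natFloor_add_one_le {ε : ℝ} (hε : 0 < ε) (hε1 : ε ≤ 1) :
    2 * (⌊1 / (2 * ε)⌋₊ : ℝ) + 1 ≤ 2 / ε := by
  have hfloor := Nat.floor_le (by positivity : 0 ≤ 1 / (2 * ε))
  have h1 : 1 ≤ 1 / ε := by rwa [le_div_iff₀ hε, one_mul]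
  calc 2 * (⌊1 / (2 * ε)⌋₊ : ℝ) + 1 ≤ 2 * (1 / (2 * ε)) + 1 := by gcongr
    _ = 1 / ε + 1 := by field_simp
    _ ≤ 1 / ε + 1 / ε := by gcongr
    _ = 2 / ε := by ring

/-- For every `Λ ∈ (0,1)` there is `C > 0` such that for all `ε ∈ (0,1]`,
`Λ/(2ε) < N ≤ 1/(2ε)`, `t ≥ 0` and `z ∈ ℝ²`, the contribution of the frequency window
`Λ/(2ε) < ⟨n⟩ ≤ N` to the damped-wave covariance function is bounded by `C`. -/
theorem dampedWave_covariance_window_bound (Λ : ℝ) (hΛ : Λ ∈ Set.Ioo (0:ℝ) 1) :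
    ∃ C : ℝ, 0 < C ∧ ∀ (ε N t : ℝ) (z : ℝ × ℝ), ε ∈ Set.Ioc (0:ℝ) 1 →
      Λ / (2 * ε) < N → N ≤ 1 / (2 * ε) → 0 ≤ t →
      ‖(∑' n : ℤ × ℤ,
        if Λ / (2 * ε) < jb n ∧ jb n ≤ N then
          (((∫ s in (0:ℝ)..t,
              Real.exp (-s / ε ^ 2) * s ^ 2 * (phi (s ^ 2 * lam ε (jb n) ^ 2)) ^ 2) / ε ^ 4
              : ℝ) : ℂ) *
            Complex.exp (Complex.I * ((dotZ n z : ℝ) : ℂ))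
        else 0)‖ ≤ C := by
  have hc := one_sub_sqrt_one_sub_sq_pos hΛ.1
  refine ⟨8 / (1 - √(1 - Λ ^ 2)) ^ 3, by positivity, fun ε N t z hε _ hN ht => ?_⟩
  have hε0 := hε.1
  calc _ ≤ #(latticeSquare ⌊1 / (2 * ε)⌋₊) * (2 * ε ^ 2 / (1 - √(1 - Λ ^ 2)) ^ 3) := by
        refine norm_tsum_le_card_mul _ (fun n hn => if_neg fun h =>
          hn (mem_latticeSquare_of_jb_le (h.2.trans hN))) (fun n _ => ?_)
        split_ifs with h
        · rw [norm_mul, Complex.norm_real, Complex.norm_exp_I_mul_ofReal, mul_one, norm_eq_abs]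
          exact abs_dampedWaveVariance_le hε0 ht hΛ.1 h.1
        · rw [norm_zero]
          positivity
    _ ≤ (2 / ε) ^ 2 * (2 * ε ^ 2 / (1 - √(1 - Λ ^ 2)) ^ 3) := by
        rw [card_latticeSquare]
        push_cast
        gcongr
        exact two_mul_natFloor_add_one_le hε0 hε.2
    _ = 8 / (1 - √(1 - Λ ^ 2)) ^ 3 := by field_simp; ring
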